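/- arXiv:2510.18828 — 2 statements merged into one kernel-verified Lean document; each statement's English description precedes it below -/
import Mathlib

section
/- With the wire-fitting interpolant $f(u) = \frac{\sum_i y_i w_i(u)}{\sum_i w_i(u)}$, $w_i(u) = 1/(|u-u_i|^2 + c_i(y_{\max}-y_i))$, $c_i > 0$, suppose $j$ is an index attaining the maximum value, $y_j = y_{\max} = \max_k y_k$, and the control points are distinct. Then $\lim_{u \to u_j} f(u) = y_{\max}$, i.e., the continuous extension of $f$ attains its global maximum $y_{\max}$ at the control-point $u_j$. -/
/-!
Divide numerator and denominator by the weight `w_j` of the maximizing control point. Near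
`u_j` this weight equals `‖u - u_j‖⁻²` and blows up, while every other weight stays bounded
(it is continuous and positive at `u_j`, by distinctness of the control points and
`c_i (y_max - y_i) ≥ 0`). So the normalized weights tend to the indicator of `j`, and the
weighted average tends to `y_j = y_max`.
-/

open Filter Topology Finset

section WeightedAverage

variable {X ι : Type*} {l : Filter X} {w : ι → X → ℝ} {j : ι}

theorem tendsto_div_weight_of_tendsto_atTop [DecidableEq ι] (hj : Tendsto (w j) l atTop)
    (hbdd : ∀ i ≠ j, IsBoundedUnder (· ≤ ·) l (norm ∘ w i)) (i : ι) :
    Tendsto (fun x => w i x / w j x) l (𝓝 (if i = j then 1 else 0)) := by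
  split_ifs with hij
  · subst hij
    refine tendsto_const_nhds.congr' ?_
    filter_upwards [hj.eventually_ne_atTop 0] with x hx
    exact (div_self hx).symm
  · exact isBoundedUnder_le_mul_tendsto_zero (hbdd i hij) (tendsto_inv_atTop_zero.comp hj)

theorem tendsto_weighted_average_of_tendsto_atTop [Fintype ι] (hj : Tendsto (w j) l atTop)
    (hbdd : ∀ i ≠ j, IsBoundedUnder (· ≤ ·) l (norm ∘ w i)) (v : ι → ℝ) :
    Tendsto (fun x => (∑ i, v i * w i x) / ∑ i, w i x) l (𝓝 (v j)) := by
  classical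
  have hratio := tendsto_div_weight_of_tendsto_atTop hj hbdd
  have hnum : Tendsto (fun x => ∑ i, v i * (w i x / w j x)) l (𝓝 (v j)) := by
    simpa using tendsto_finsetSum univ fun i _ => (hratio i).const_mul (v i)
  have hden : Tendsto (fun x => ∑ i, w i x / w j x) l (𝓝 1) := by
    simpa using tendsto_finsetSum univ fun i _ => hratio i
  have hlim : Tendsto (fun x => (∑ i, v i * (w i x / w j x)) / ∑ i, w i x / w j x) l (𝓝 (v j)) :=
    div_one (v j) ▸ hnum.div hden one_ne_zero
  refine hlim.congr' ?_
  filter_upwards [hj.eventually_ne_atTop 0] with x hx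
  simp only [div_eq_mul_inv, ← mul_assoc, ← Finset.sum_mul]
  exact mul_div_mul_right _ _ (inv_ne_zero hx)

end WeightedAverage

theorem tendsto_inv_norm_sub_sq_nhdsNE {E : Type*} [NormedAddCommGroup E] (a : E) :
    Tendsto (fun u => (‖u - a‖ ^ 2)⁻¹) (𝓝[≠] a) atTop := by
  simpa only [Function.comp_def, inv_pow] using
    (tendsto_pow_atTop two_ne_zero).comp
      (tendsto_inv_nhdsGT_zero.comp (tendsto_norm_sub_self_nhdsNE a))

/-- The continuous extension of the wire-fitting interpolant attains the global maximum
value `ymax` at the maximizing control-point `a j`. -/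
theorem wire_fitting_tendsto_max
    (d N : ℕ) (y : Fin N → ℝ) (a : Fin N → EuclideanSpace ℝ (Fin d))
    (c : Fin N → ℝ) (hc : ∀ i, 0 < c i) (hinj : Function.Injective a)
    (ymax : ℝ) (hub : ∀ k, y k ≤ ymax)
    (j : Fin N) (hj : y j = ymax) :
    Filter.Tendsto
      (fun u : EuclideanSpace ℝ (Fin d) =>
        (∑ i, y i * (‖u - a i‖ ^ 2 + c i * (ymax - y i))⁻¹) /
          (∑ i, (‖u - a i‖ ^ 2 + c i * (ymax - y i))⁻¹))
      (nhdsWithin (a j) {a j}ᶜ) (nhds ymax) := by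
  have hmax : Tendsto (fun u => (‖u - a j‖ ^ 2 + c j * (ymax - y j))⁻¹) (𝓝[≠] a j) atTop := by
    simpa [hj] using tendsto_inv_norm_sub_sq_nhdsNE (a j)
  have hbdd : ∀ i ≠ j, IsBoundedUnder (· ≤ ·) (𝓝[≠] a j)
      (norm ∘ fun u => (‖u - a i‖ ^ 2 + c i * (ymax - y i))⁻¹) := by
    intro i hi
    have hdist : 0 < ‖a j - a i‖ ^ 2 := pow_pos (norm_pos_iff.2 (sub_ne_zero.2 (hinj.ne hi.symm))) 2
    have hpos : 0 < ‖a j - a i‖ ^ 2 + c i * (ymax - y i) :=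
      add_pos_of_pos_of_nonneg hdist (mul_nonneg (hc i).le (sub_nonneg.2 (hub i)))
    have hcont : ContinuousAt (fun u => (‖u - a i‖ ^ 2 + c i * (ymax - y i))⁻¹) (a j) :=
      (by fun_prop : Continuous fun u => ‖u - a i‖ ^ 2 + c i * (ymax - y i)).continuousAt.inv₀
        hpos.ne'
    exact (hcont.tendsto.mono_left nhdsWithin_le_nhds).norm.isBoundedUnder_le
  have hlim := tendsto_weighted_average_of_tendsto_atTop hmax hbdd y
  rwa [hj] at hlim
end

section
/- Consider the wire-fitting weights $w_i(a) = 1/(|a - a_i| + c \Delta_i)$ with common smoothing $c > 0$ and $\Delta_i = \max_k y_k - y_i$. As $c \to 0^+$, for each control-point index $m$ with $a_m$ distinct from all other $a_i$: $\lim_{c \to 0^+} f(a_m) = y_m$, where $f(a) = \sum_i y_i w_i(a) / \sum_i w_i(a)$ (extended by continuity). That is, with vanishing smoothing the interpolant passes exactly through every control-point. -/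
/-!
At `u = a m` the `m`-th weight is `(c Δₘ)⁻¹` while every other weight stays bounded, since
`a m ≠ a i` keeps `‖a m - a i‖ + c Δᵢ` away from `0`. If `Δₘ > 0`, dividing numerator and
denominator by the `m`-th weight shows that the normalized weights tend to the indicator of `m`,
so the weighted average tends to `y m`. If `Δₘ = 0`, the `m`-th denominator vanishes for every
`c > 0` and no other one does, so the continuous extension is exactly `y m`.
-/

open Finset in
/-- Wire-fitting interpolant with common smoothing `c`, extended by continuity where a
weight denominator vanishes. -/
noncomputable def wireFitExt {d N : ℕ} (a : Fin N → EuclideanSpace ℝ (Fin d))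
    (y Δ : Fin N → ℝ) (c : ℝ) (u : EuclideanSpace ℝ (Fin d)) : ℝ :=
  if h : ∃ i, ‖u - a i‖ + c * Δ i = 0 then y h.choose
  else (∑ i, y i * (‖u - a i‖ + c * Δ i)⁻¹) / (∑ i, (‖u - a i‖ + c * Δ i)⁻¹)

open Filter Topology Finset

theorem tendsto_sum_mul_div_sum_of_dominant {α ι : Type*} [Fintype ι] {l : Filter α}
    (w : ι → α → ℝ) (y : ι → ℝ) (m : ι) (hm : ∀ᶠ x in l, w m x ≠ 0)
    (hdom : ∀ i ≠ m, Tendsto (fun x => w i x / w m x) l (𝓝 0)) :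
    Tendsto (fun x => (∑ i, y i * w i x) / ∑ i, w i x) l (𝓝 (y m)) := by
  classical
  have hratio : ∀ i, Tendsto (fun x => w i x / w m x) l (𝓝 (if i = m then 1 else 0)) := by
    intro i
    rcases eq_or_ne i m with rfl | hi
    · rw [if_pos rfl]
      exact tendsto_const_nhds.congr' (hm.mono fun x hx => (div_self hx).symm)
    · simpa [hi] using hdom i hi
  have hnum : Tendsto (fun x => ∑ i, y i * (w i x / w m x)) l (𝓝 (y m)) := by
    simpa [mul_ite, sum_ite_eq'] using
      tendsto_finsetSum univ fun i _ => (hratio i).const_mul (y i)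
  have hden : Tendsto (fun x => ∑ i, w i x / w m x) l (𝓝 1) := by
    simpa [sum_ite_eq'] using tendsto_finsetSum univ fun i _ => hratio i
  have hquot := hnum.div hden one_ne_zero
  rw [div_one] at hquot
  refine hquot.congr' (hm.mono fun x hx => ?_)
  simp only [Pi.div_apply, ← mul_div_assoc, ← sum_div, div_div_div_cancel_right₀ hx]

section WireFit

variable {d N : ℕ} (a : Fin N → EuclideanSpace ℝ (Fin d)) (y Δ : Fin N → ℝ) {c : ℝ}
  {u : EuclideanSpace ℝ (Fin d)}

theorem wireFitExt_of_forall_ne_zero (h : ∀ i, ‖u - a i‖ + c * Δ i ≠ 0) :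
    wireFitExt a y Δ c u =
      (∑ i, y i * (‖u - a i‖ + c * Δ i)⁻¹) / ∑ i, (‖u - a i‖ + c * Δ i)⁻¹ := by
  rw [wireFitExt, dif_neg (not_exists.2 h)]

theorem wireFitExt_of_eq_zero_iff {m : Fin N} (h : ∀ i, ‖u - a i‖ + c * Δ i = 0 ↔ i = m) :
    wireFitExt a y Δ c u = y m := by
  have hex : ∃ i, ‖u - a i‖ + c * Δ i = 0 := ⟨m, (h m).2 rfl⟩
  rw [wireFitExt, dif_pos hex, (h _).1 hex.choose_spec]

variable {a Δ}

theorem wire_denom_eq_zero_iff (hinj : Function.Injective a) (hc : 0 < c) (m : Fin N)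
    {i : Fin N} (hΔ : 0 ≤ Δ i) : ‖a m - a i‖ + c * Δ i = 0 ↔ i = m ∧ Δ i = 0 := by
  rw [add_eq_zero_iff_of_nonneg (norm_nonneg _) (mul_nonneg hc.le hΔ), norm_eq_zero,
    sub_eq_zero, hinj.eq_iff, mul_eq_zero, or_iff_right hc.ne', eq_comm]

theorem tendsto_wire_weight_ratio (hinj : Function.Injective a) {m i : Fin N} (hi : i ≠ m) :
    Tendsto (fun c : ℝ => (‖a m - a i‖ + c * Δ i)⁻¹ / (‖a m - a m‖ + c * Δ m)⁻¹)
      (𝓝[>] 0) (𝓝 0) := by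
  have hdist : ‖a m - a i‖ ≠ 0 := by
    rw [norm_ne_zero_iff, sub_ne_zero]
    exact hinj.ne hi.symm
  simp_rw [inv_div_inv]
  refine tendsto_nhdsWithin_of_tendsto_nhds ?_
  have hcont : ContinuousAt (fun c : ℝ => (‖a m - a m‖ + c * Δ m) / (‖a m - a i‖ + c * Δ i)) 0 :=
    ContinuousAt.div (by fun_prop) (by fun_prop) (by simpa using hdist)
  simpa using hcont.tendsto

end WireFit

/-- As the smoothing parameter `c → 0⁺`, the wire-fitting interpolant passes exactly
through every control-point. -/
theorem wire_fitting_vanishing_smoothing_interpolates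
    (d N : ℕ) (hne : (Finset.univ : Finset (Fin N)).Nonempty)
    (a : Fin N → EuclideanSpace ℝ (Fin d)) (hinj : Function.Injective a)
    (y Δ : Fin N → ℝ) (hΔ : ∀ i, Δ i = Finset.univ.sup' hne y - y i) :
    ∀ m : Fin N,
      Filter.Tendsto (fun c : ℝ => wireFitExt a y Δ c (a m))
        (nhdsWithin 0 (Set.Ioi 0)) (nhds (y m)) := by
  intro m
  have hΔ0 : ∀ i, 0 ≤ Δ i := fun i => by
    rw [hΔ i, sub_nonneg]
    exact le_sup' y (mem_univ i)
  have hden (c : ℝ) (hc : 0 < c) (i : Fin N) :=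
    wire_denom_eq_zero_iff hinj hc m (hΔ0 i)
  rcases (hΔ0 m).eq_or_lt with hm | hm
  · refine tendsto_const_nhds.congr' (eventually_nhdsWithin_of_forall fun c hc => ?_)
    refine (wireFitExt_of_eq_zero_iff a y Δ fun i => ?_).symm
    rw [hden c hc, and_iff_left_iff_imp]
    rintro rfl
    exact hm.symm
  · have hne0 : ∀ᶠ c in 𝓝[>] (0 : ℝ), ∀ i, ‖a m - a i‖ + c * Δ i ≠ 0 :=
      eventually_nhdsWithin_of_forall fun c hc i h =>
        hm.ne' (by obtain ⟨rfl, hΔi⟩ := (hden c hc i).1 h; exact hΔi)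
    have hlim := tendsto_sum_mul_div_sum_of_dominant
      (fun i c => (‖a m - a i‖ + c * Δ i)⁻¹) y m (hne0.mono fun c hc => inv_ne_zero (hc m))
      fun i hi => tendsto_wire_weight_ratio hinj hi
    exact hlim.congr' (hne0.mono fun c hc => (wireFitExt_of_forall_ne_zero a y Δ hc).symm)
end
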